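/- Let 0 < r < ∞ and let κ_r be the unique number in (0,∞) with lim_{k→∞} (1/k) log Σ_{σ∈Ω_k} (μ_h(J_σ) ‖φ'_σ‖^r)^{κ_r/(r+κ_r)} = 0. Then, with L := η^3 ξ^{3h}, for every n ≥ 1 one has (Lξ^r)^{-κ_r/(r+κ_r)} ≤ Σ_{σ∈Ω_n} (μ_h(J_σ) ‖φ'_σ‖^r)^{κ_r/(r+κ_r)} ≤ (Lξ^r)^{κ_r/(r+κ_r)}. -/

import Mathlib

open MeasureTheory Filter Metric

noncomputable section

/-- A cookie-cutter system on `J = [0,1]`. -/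
structure CookieCutter where
  N : ℕ
  hN : 2 ≤ N
  Jsub : Fin N → Set ℝ
  f : ℝ → ℝ
  φ : Fin N → ℝ → ℝ
  c : ℝ
  γ : ℝ
  b : ℝ
  B : ℝ
  hJsub_sub : ∀ j, Jsub j ⊆ Set.Icc 0 1
  hJsub_interval : ∀ j, ∃ u v : ℝ, u ≤ v ∧ Jsub j = Set.Icc u v
  hJsub_disj : ∀ i j, i ≠ j → Disjoint (Jsub i) (Jsub j)
  hbij : ∀ j, Set.BijOn f (Jsub j) (Set.Icc 0 1)
  hφ_maps : ∀ j, ∀ x ∈ Set.Icc (0:ℝ) 1, φ j x ∈ Jsub j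
  hφ_rinv : ∀ j, ∀ x ∈ Set.Icc (0:ℝ) 1, f (φ j x) = x
  hφ_linv : ∀ j, ∀ x ∈ Jsub j, φ j (f x) = x
  hfdiff : ∀ j, ∀ x ∈ Jsub j, DifferentiableAt ℝ f x
  hφdiff : ∀ j, ∀ x ∈ Set.Icc (0:ℝ) 1, DifferentiableAt ℝ (φ j) x
  hc : 0 < c
  hγ : γ ∈ Set.Ioc (0:ℝ) 1
  hHolder : ∀ j, ∀ x ∈ Jsub j, ∀ y ∈ Jsub j, |deriv f x - deriv f y| ≤ c * |x - y| ^ γ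
  hb : IsGLB ((fun x => |deriv f x|) '' ⋃ j, Jsub j) b
  hB : IsLUB ((fun x => |deriv f x|) '' ⋃ j, Jsub j) B
  hb1 : 1 < b

namespace CookieCutter

variable (cc : CookieCutter)

/-- `φ_σ = φ_{σ_1} ∘ ⋯ ∘ φ_{σ_n}` for a word `σ`. -/
def wordMap : List (Fin cc.N) → ℝ → ℝ
  | [] => id
  | j :: rest => cc.φ j ∘ wordMap rest

/-- The basic interval `J_σ = φ_σ(J)`. -/
def Jc (σ : List (Fin cc.N)) : Set ℝ := cc.wordMap σ '' Set.Icc 0 1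

/-- The diameter `|J_σ|`. -/
def diamJ (σ : List (Fin cc.N)) : ℝ := Metric.diam (cc.Jc σ)

/-- `‖φ'_σ‖ = sup_{x ∈ J} |φ'_σ(x)|`. -/
def φnorm (σ : List (Fin cc.N)) : ℝ :=
  sSup ((fun x => |deriv (cc.wordMap σ) x|) '' Set.Icc 0 1)

/-- The distortion constant `ξ = exp (c / (b^γ − 1))`. -/
def xi : ℝ := Real.exp (cc.c / (cc.b ^ cc.γ - 1))

/-- The cookie-cutter set `E = ⋂_{n ≥ 1} ⋃_{σ ∈ Ω_n} J_σ`. -/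
def E : Set ℝ := ⋂ (n : ℕ) (_ : 1 ≤ n), ⋃ σ : Fin n → Fin cc.N, cc.Jc (List.ofFn σ)

/-- `η = ξ^{9h}`. -/
def eta (h : ℝ) : ℝ := cc.xi ^ ((9:ℝ) * h)

/-- `L = η³ ξ^{3h}`. -/
def Lconst (h : ℝ) : ℝ := (cc.eta h) ^ 3 * cc.xi ^ ((3:ℝ) * h)

/-- A Gibbs-like measure for the cookie-cutter system: a Borel probability measure
supported on `E` with `η⁻¹|J_σ|^h ≤ μ(J_σ) ≤ η|J_σ|^h` for every word `σ`. -/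
def IsGibbsLike (μ : Measure ℝ) (h : ℝ) : Prop :=
  IsProbabilityMeasure μ ∧ μ (cc.Eᶜ) = 0 ∧
    ∀ σ : List (Fin cc.N), σ ≠ [] →
      (cc.eta h)⁻¹ * cc.diamJ σ ^ h ≤ (μ (cc.Jc σ)).toReal ∧
      (μ (cc.Jc σ)).toReal ≤ cc.eta h * cc.diamJ σ ^ h

/-- A finite maximal antichain in `Ω`. -/
def IsFMA (Γ : Finset (List (Fin cc.N))) : Prop :=
  (∀ σ ∈ Γ, σ ≠ []) ∧
  (∀ ω : ℕ → Fin cc.N, ∃ k : ℕ, 1 ≤ k ∧ (List.ofFn fun i : Fin k => ω i) ∈ Γ) ∧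
  ∀ σ ∈ Γ, ∀ τ ∈ Γ, σ <+: τ → σ = τ

end CookieCutter

/-- The `n`-th quantization error of order `r`. -/
def Vnr (μ : Measure ℝ) (n : ℕ) (r : ℝ) : ℝ :=
  sInf ((fun α : Finset ℝ => ∫ x, Metric.infDist x (α : Set ℝ) ^ r ∂μ) ''
    {α : Finset ℝ | α.Nonempty ∧ α.card ≤ n})

/-- The auxiliary quantization error `u_{n,r}` with `U = (0,1)`. -/
def unr (μ : Measure ℝ) (n : ℕ) (r : ℝ) : ℝ :=
  sInf ((fun α : Finset ℝ =>
      ∫ x, Metric.infDist x ((α : Set ℝ) ∪ (Set.Ioo (0:ℝ) 1)ᶜ) ^ r ∂μ) ''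
    {α : Finset ℝ | α.card ≤ n})

/-!
Bounded distortion, `|φ'_σ(x)| ≤ ξ |φ'_σ(y)|` on `J`, makes `‖φ'_σ‖` comparable to `|J_σ|` and
quasi-multiplicative in `σ`. Combined with the Gibbs property, the weights
`a(σ) = μ_h(J_σ) ‖φ'_σ‖^r` satisfy `a(στ) ≤ C a(σ) a(τ)` and `a(σ) a(τ) ≤ C a(στ)` with
`C = L ξ^r`, so with `s = κ_r / (r + κ_r)` and `D = C^s` the sums `S_n = Σ_{σ ∈ Ω_n} a(σ)^s`
satisfy `S_{m+n} ≤ D S_m S_n` and `S_m S_n ≤ D S_{m+n}`. Thus `log (D S_n)` is subadditive and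
`log (S_n / D)` superadditive; as `(1/n) log S_n → 0`, Fekete's lemma gives
`log (S_n / D) ≤ 0 ≤ log (D S_n)` for every `n ≥ 1`.
-/

open Real Set

theorem Subadditive.nonneg_of_tendsto_zero {u : ℕ → ℝ} (hu : Subadditive u)
    (hlim : Tendsto (fun n => u n / n) atTop (nhds 0)) (n : ℕ) : 0 ≤ u n := by
  rcases eq_or_ne n 0 with rfl | hn
  · linarith [hu 0 0]
  have hbdd := hlim.bddBelow_range
  have hle := hu.lim_le_div hbdd hn
  rwa [tendsto_nhds_unique (hu.tendsto_lim hbdd) hlim,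
    le_div_iff₀ (Nat.cast_pos.2 (Nat.pos_of_ne_zero hn)), zero_mul] at hle

theorem one_le_of_submultiplicative {v : ℕ → ℝ} (hpos : ∀ n, 0 < n → 0 < v n)
    (hsub : ∀ m n, 0 < m → 0 < n → v (m + n) ≤ v m * v n)
    (hlim : Tendsto (fun n : ℕ => log (v n) / n) atTop (nhds 0)) {n : ℕ} (hn : 0 < n) :
    1 ≤ v n := by
  -- `log ∘ v`, extended by `0` at `0`, is subadditive on all of `ℕ`
  let x : ℕ → ℝ := fun n => if n = 0 then 0 else log (v n)
  have hx : Subadditive x := by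
    intro m k
    rcases Nat.eq_zero_or_pos m with rfl | hm
    · simp [x]
    rcases Nat.eq_zero_or_pos k with rfl | hk
    · simp [x]
    simp only [x, hm.ne', hk.ne', Nat.add_eq_zero_iff, and_self, if_false]
    rw [← log_mul (hpos m hm).ne' (hpos k hk).ne']
    exact log_le_log (hpos _ (by omega)) (hsub m k hm hk)
  have hxlim : Tendsto (fun n => x n / n) atTop (nhds 0) :=
    hlim.congr' (eventually_atTop.2 ⟨1, fun k hk => by simp [x, Nat.one_le_iff_ne_zero.1 hk]⟩)
  have := hx.nonneg_of_tendsto_zero hxlim n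
  simp only [x, hn.ne', if_false] at this
  exact (log_nonneg_iff (hpos n hn)).1 this

theorem inv_le_and_le_of_quasi_multiplicative {u : ℕ → ℝ} {D : ℝ} (hD : 0 < D)
    (hpos : ∀ n, 0 < n → 0 < u n)
    (hsub : ∀ m n, 0 < m → 0 < n → u (m + n) ≤ D * (u m * u n))
    (hsup : ∀ m n, 0 < m → 0 < n → u m * u n ≤ D * u (m + n))
    (hlim : Tendsto (fun n : ℕ => log (u n) / n) atTop (nhds 0)) {n : ℕ} (hn : 0 < n) :
    D⁻¹ ≤ u n ∧ u n ≤ D := by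
  have hD_div : Tendsto (fun n : ℕ => log D / n) atTop (nhds 0) :=
    tendsto_const_div_atTop_nhds_zero_nat _
  have hlim_mul : Tendsto (fun n : ℕ => log (D * u n) / n) atTop (nhds 0) := by
    refine (by simpa using hD_div.add hlim : Tendsto _ _ _).congr'
      (eventually_atTop.2 ⟨1, fun k hk => ?_⟩)
    simp only [log_mul hD.ne' (hpos k hk).ne', add_div]
  have hlim_div : Tendsto (fun n : ℕ => log (D / u n) / n) atTop (nhds 0) := by
    refine (by simpa using hD_div.sub hlim : Tendsto _ _ _).congr'
      (eventually_atTop.2 ⟨1, fun k hk => ?_⟩)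
    simp only [log_div hD.ne' (hpos k hk).ne', sub_div]
  constructor
  · have := one_le_of_submultiplicative (v := fun n => D * u n)
      (fun n hn => mul_pos hD (hpos n hn))
      (fun m k hm hk => by nlinarith [hsub m k hm hk, hpos m hm, hpos k hk]) hlim_mul hn
    rwa [inv_le_iff_one_le_mul₀' hD]
  · have := one_le_of_submultiplicative (v := fun n => D / u n)
      (fun n hn => div_pos hD (hpos n hn))
      (fun m k hm hk => by
        have := hpos m hm; have := hpos k hk; have := hpos (m + k) (by omega)
        rw [div_mul_div_comm, div_le_div_iff₀ (by positivity) (by positivity)]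
        nlinarith [hsup m k hm hk])
      hlim_div hn
    rwa [one_le_div (hpos n hn)] at this

theorem sum_ofFn_add {α M : Type*} [Fintype α] [AddCommMonoid M] (F : List α → M) (m n : ℕ) :
    ∑ σ : Fin (m + n) → α, F (List.ofFn σ) =
      ∑ σ : Fin m → α, ∑ τ : Fin n → α, F (List.ofFn σ ++ List.ofFn τ) := by
  rw [← (Fin.appendEquiv m n).sum_comp, Fintype.sum_prod_type]
  simp [Fin.appendEquiv, List.ofFn_fin_append]

theorem sum_ofFn_add_le {α : Type*} [Fintype α] {F : List α → ℝ} {C : ℝ} {m n : ℕ}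
    (hF : ∀ (σ : Fin m → α) (τ : Fin n → α),
      F (List.ofFn σ ++ List.ofFn τ) ≤ C * (F (List.ofFn σ) * F (List.ofFn τ))) :
    ∑ σ : Fin (m + n) → α, F (List.ofFn σ) ≤
      C * ((∑ σ : Fin m → α, F (List.ofFn σ)) * ∑ τ : Fin n → α, F (List.ofFn τ)) := by
  rw [sum_ofFn_add, Finset.sum_mul_sum, Finset.mul_sum]
  refine Finset.sum_le_sum fun σ _ => ?_
  rw [Finset.mul_sum]
  exact Finset.sum_le_sum fun τ _ => hF σ τ

theorem sum_ofFn_mul_sum_ofFn_le {α : Type*} [Fintype α] {F : List α → ℝ} {C : ℝ} {m n : ℕ}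
    (hF : ∀ (σ : Fin m → α) (τ : Fin n → α),
      F (List.ofFn σ) * F (List.ofFn τ) ≤ C * F (List.ofFn σ ++ List.ofFn τ)) :
    (∑ σ : Fin m → α, F (List.ofFn σ)) * ∑ τ : Fin n → α, F (List.ofFn τ) ≤
      C * ∑ σ : Fin (m + n) → α, F (List.ofFn σ) := by
  rw [sum_ofFn_add, Finset.sum_mul_sum, Finset.mul_sum]
  refine Finset.sum_le_sum fun σ _ => ?_
  rw [Finset.mul_sum]
  exact Finset.sum_le_sum fun τ _ => hF σ τ

namespace CookieCutter

variable (cc : CookieCutter)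

lemma b_pos : 0 < cc.b := zero_lt_one.trans cc.hb1

lemma one_le_xi : 1 ≤ cc.xi :=
  one_le_exp (div_nonneg cc.hc.le (by linarith [one_lt_rpow cc.hb1 cc.hγ.1]))

lemma xi_pos : 0 < cc.xi := zero_lt_one.trans_le cc.one_le_xi

lemma b_le_abs_deriv_f {j : Fin cc.N} {y : ℝ} (hy : y ∈ cc.Jsub j) : cc.b ≤ |deriv cc.f y| :=
  cc.hb.1 ⟨y, mem_iUnion.2 ⟨j, hy⟩, rfl⟩

lemma deriv_φ {j : Fin cc.N} {x : ℝ} (hx : x ∈ Icc (0:ℝ) 1) :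
    deriv (cc.φ j) x = (deriv cc.f (cc.φ j x))⁻¹ := by
  have hcomp : HasDerivWithinAt (cc.f ∘ cc.φ j)
      (deriv cc.f (cc.φ j x) * deriv (cc.φ j) x) (Icc 0 1) x :=
    ((cc.hfdiff j _ (cc.hφ_maps j x hx)).hasDerivAt.comp x
      (cc.hφdiff j x hx).hasDerivAt).hasDerivWithinAt
  have hid : HasDerivWithinAt (cc.f ∘ cc.φ j) 1 (Icc 0 1) x :=
    (hasDerivWithinAt_id x _).congr (fun y hy => cc.hφ_rinv j y hy) (cc.hφ_rinv j x hx)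
  exact eq_inv_of_mul_eq_one_right ((uniqueDiffOn_Icc zero_lt_one x hx).eq_deriv _ hcomp hid)

lemma abs_deriv_φ_le {j : Fin cc.N} {x : ℝ} (hx : x ∈ Icc (0:ℝ) 1) :
    |deriv (cc.φ j) x| ≤ cc.b⁻¹ := by
  rw [cc.deriv_φ hx, abs_inv]
  exact inv_anti₀ cc.b_pos (cc.b_le_abs_deriv_f (cc.hφ_maps j x hx))

lemma deriv_φ_ne_zero {j : Fin cc.N} {x : ℝ} (hx : x ∈ Icc (0:ℝ) 1) :
    deriv (cc.φ j) x ≠ 0 := by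
  rw [cc.deriv_φ hx]
  exact inv_ne_zero (abs_pos.1 (cc.b_pos.trans_le (cc.b_le_abs_deriv_f (cc.hφ_maps j x hx))))

lemma abs_deriv_f_le_exp_mul {j : Fin cc.N} {p q : ℝ} (hp : p ∈ cc.Jsub j) (hq : q ∈ cc.Jsub j) :
    |deriv cc.f p| ≤ exp (cc.c * |p - q| ^ cc.γ) * |deriv cc.f q| := by
  have hq1 : 1 ≤ |deriv cc.f q| := cc.hb1.le.trans (cc.b_le_abs_deriv_f hq)
  have hδ : 0 ≤ cc.c * |p - q| ^ cc.γ := mul_nonneg cc.hc.le (by positivity)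
  calc |deriv cc.f p| ≤ |deriv cc.f q| + cc.c * |p - q| ^ cc.γ := by
        linarith [abs_sub_abs_le_abs_sub (deriv cc.f p) (deriv cc.f q), cc.hHolder j p hp q hq]
    _ ≤ (1 + cc.c * |p - q| ^ cc.γ) * |deriv cc.f q| := by nlinarith
    _ ≤ exp (cc.c * |p - q| ^ cc.γ) * |deriv cc.f q| := by
        gcongr
        linarith [add_one_le_exp (cc.c * |p - q| ^ cc.γ)]

lemma abs_deriv_φ_le_exp_mul {j : Fin cc.N} {x y : ℝ} (hx : x ∈ Icc (0:ℝ) 1)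
    (hy : y ∈ Icc (0:ℝ) 1) :
    |deriv (cc.φ j) x| ≤ exp (cc.c * |cc.φ j x - cc.φ j y| ^ cc.γ) * |deriv (cc.φ j) y| := by
  have hfy := cc.abs_deriv_f_le_exp_mul (cc.hφ_maps j y hy) (cc.hφ_maps j x hx)
  have hfx_pos := cc.b_pos.trans_le (cc.b_le_abs_deriv_f (cc.hφ_maps j x hx))
  have hfy_pos := cc.b_pos.trans_le (cc.b_le_abs_deriv_f (cc.hφ_maps j y hy))
  rw [abs_sub_comm] at hfy
  rw [cc.deriv_φ hx, cc.deriv_φ hy, abs_inv, abs_inv, ← div_eq_mul_inv,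
    inv_le_iff_one_le_mul₀' hfx_pos, mul_div_assoc', le_div_iff₀ hfy_pos, one_mul]
  exact hfy.trans_eq (mul_comm _ _)

lemma wordMap_mem (σ : List (Fin cc.N)) {x : ℝ} (hx : x ∈ Icc (0:ℝ) 1) :
    cc.wordMap σ x ∈ Icc (0:ℝ) 1 := by
  induction σ with
  | nil => exact hx
  | cons j σ ih => exact cc.hJsub_sub j (cc.hφ_maps j _ ih)

lemma differentiableAt_wordMap (σ : List (Fin cc.N)) {x : ℝ} (hx : x ∈ Icc (0:ℝ) 1) :
    DifferentiableAt ℝ (cc.wordMap σ) x := by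
  induction σ with
  | nil => exact differentiableAt_id
  | cons j σ ih => exact (cc.hφdiff j _ (cc.wordMap_mem σ hx)).comp x ih

lemma deriv_wordMap_cons (j : Fin cc.N) (σ : List (Fin cc.N)) {x : ℝ} (hx : x ∈ Icc (0:ℝ) 1) :
    deriv (cc.wordMap (j :: σ)) x = deriv (cc.φ j) (cc.wordMap σ x) * deriv (cc.wordMap σ) x :=
  deriv_comp x (cc.hφdiff j _ (cc.wordMap_mem σ hx)) (cc.differentiableAt_wordMap σ hx)

lemma deriv_wordMap_ne_zero (σ : List (Fin cc.N)) {x : ℝ} (hx : x ∈ Icc (0:ℝ) 1) :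
    deriv (cc.wordMap σ) x ≠ 0 := by
  induction σ with
  | nil => simp [wordMap]
  | cons j σ ih =>
    rw [cc.deriv_wordMap_cons j σ hx]
    exact mul_ne_zero (cc.deriv_φ_ne_zero (cc.wordMap_mem σ hx)) ih

lemma abs_deriv_wordMap_le (σ : List (Fin cc.N)) {x : ℝ} (hx : x ∈ Icc (0:ℝ) 1) :
    |deriv (cc.wordMap σ) x| ≤ cc.b⁻¹ ^ σ.length := by
  induction σ with
  | nil => simp [wordMap]
  | cons j σ ih =>
    rw [cc.deriv_wordMap_cons j σ hx, abs_mul, List.length_cons, pow_succ']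
    exact mul_le_mul (cc.abs_deriv_φ_le (cc.wordMap_mem σ hx)) ih (abs_nonneg _)
      (inv_nonneg.2 cc.b_pos.le)

lemma abs_wordMap_sub_le (σ : List (Fin cc.N)) {C : ℝ}
    (hC : ∀ z ∈ Icc (0:ℝ) 1, |deriv (cc.wordMap σ) z| ≤ C)
    {x y : ℝ} (hx : x ∈ Icc (0:ℝ) 1) (hy : y ∈ Icc (0:ℝ) 1) :
    |cc.wordMap σ x - cc.wordMap σ y| ≤ C * |x - y| := by
  simpa only [Real.norm_eq_abs] using
    (convex_Icc (0:ℝ) 1).norm_image_sub_le_of_norm_hasDerivWithin_le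
      (fun z hz => (cc.differentiableAt_wordMap σ hz).hasDerivAt.hasDerivWithinAt)
      (fun z hz => (Real.norm_eq_abs _).trans_le (hC z hz)) hy hx

lemma abs_wordMap_sub_le_pow (σ : List (Fin cc.N)) {x y : ℝ} (hx : x ∈ Icc (0:ℝ) 1)
    (hy : y ∈ Icc (0:ℝ) 1) : |cc.wordMap σ x - cc.wordMap σ y| ≤ cc.b⁻¹ ^ σ.length := by
  have hxy : |x - y| ≤ 1 := abs_sub_le_iff.2 ⟨by linarith [hx.2, hy.1], by linarith [hx.1, hy.2]⟩
  calc |cc.wordMap σ x - cc.wordMap σ y| ≤ cc.b⁻¹ ^ σ.length * |x - y| :=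
        cc.abs_wordMap_sub_le σ (fun z hz => cc.abs_deriv_wordMap_le σ hz) hx hy
    _ ≤ cc.b⁻¹ ^ σ.length := mul_le_of_le_one_right (by have := cc.b_pos; positivity) hxy

-- With `K = c / (b^γ - 1)` and `t = (b^γ)⁻¹` one has `K (1 - t) = c t`, so the exponent
-- `K (1 - t ^ n)` absorbs the Hölder error `c t ^ (n + 1)` of the next letter exactly.
lemma abs_deriv_wordMap_le_exp_mul (σ : List (Fin cc.N)) {x y : ℝ} (hx : x ∈ Icc (0:ℝ) 1)
    (hy : y ∈ Icc (0:ℝ) 1) :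
    |deriv (cc.wordMap σ) x| ≤
      exp (cc.c / (cc.b ^ cc.γ - 1) * (1 - (cc.b ^ cc.γ)⁻¹ ^ σ.length)) *
        |deriv (cc.wordMap σ) y| := by
  set K := cc.c / (cc.b ^ cc.γ - 1)
  set t := (cc.b ^ cc.γ)⁻¹
  have hK : K * (1 - t) = cc.c * t := by
    have : cc.b ^ cc.γ - 1 ≠ 0 := by linarith [one_lt_rpow cc.hb1 cc.hγ.1]
    have : cc.b ^ cc.γ ≠ 0 := (rpow_pos_of_pos cc.b_pos _).ne'
    simp only [K, t]
    field_simp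
  induction σ with
  | nil => simp [wordMap]
  | cons j σ ih =>
    have hdist : cc.c * |cc.wordMap (j :: σ) x - cc.wordMap (j :: σ) y| ^ cc.γ ≤
        cc.c * t ^ (σ.length + 1) := by
      have := rpow_le_rpow (abs_nonneg _) (cc.abs_wordMap_sub_le_pow (j :: σ) hx hy) cc.hγ.1.le
      rw [List.length_cons, ← rpow_pow_comm (inv_nonneg.2 cc.b_pos.le),
        inv_rpow cc.b_pos.le] at this
      exact mul_le_mul_of_nonneg_left this cc.hc.le
    have hφ : |deriv (cc.φ j) (cc.wordMap σ x)| ≤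
        exp (cc.c * t ^ (σ.length + 1)) * |deriv (cc.φ j) (cc.wordMap σ y)| :=
      (cc.abs_deriv_φ_le_exp_mul (cc.wordMap_mem σ hx) (cc.wordMap_mem σ hy)).trans
        (mul_le_mul_of_nonneg_right (exp_le_exp.2 hdist) (abs_nonneg _))
    rw [cc.deriv_wordMap_cons j σ hx, cc.deriv_wordMap_cons j σ hy, abs_mul, abs_mul]
    calc |deriv (cc.φ j) (cc.wordMap σ x)| * |deriv (cc.wordMap σ) x|
        ≤ (exp (cc.c * t ^ (σ.length + 1)) * |deriv (cc.φ j) (cc.wordMap σ y)|) *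
            (exp (K * (1 - t ^ σ.length)) * |deriv (cc.wordMap σ) y|) :=
          mul_le_mul hφ ih (abs_nonneg _) (by positivity)
      _ = exp (K * (1 - t ^ (j :: σ).length)) *
            (|deriv (cc.φ j) (cc.wordMap σ y)| * |deriv (cc.wordMap σ) y|) := by
          rw [mul_mul_mul_comm, ← exp_add, List.length_cons]
          congr 2
          linear_combination (-t ^ σ.length) * hK

lemma abs_deriv_wordMap_le_xi_mul (σ : List (Fin cc.N)) {x y : ℝ} (hx : x ∈ Icc (0:ℝ) 1)
    (hy : y ∈ Icc (0:ℝ) 1) : |deriv (cc.wordMap σ) x| ≤ cc.xi * |deriv (cc.wordMap σ) y| := by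
  refine (cc.abs_deriv_wordMap_le_exp_mul σ hx hy).trans
    (mul_le_mul_of_nonneg_right ?_ (abs_nonneg _))
  rw [xi, exp_le_exp]
  have hbγ : 1 < cc.b ^ cc.γ := one_lt_rpow cc.hb1 cc.hγ.1
  have ht : 0 ≤ (cc.b ^ cc.γ)⁻¹ ^ σ.length := by positivity
  exact mul_le_of_le_one_right (div_nonneg cc.hc.le (by linarith)) (by linarith)

lemma le_φnorm (σ : List (Fin cc.N)) {x : ℝ} (hx : x ∈ Icc (0:ℝ) 1) :
    |deriv (cc.wordMap σ) x| ≤ cc.φnorm σ :=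
  le_csSup ⟨cc.b⁻¹ ^ σ.length, by rintro _ ⟨z, hz, rfl⟩; exact cc.abs_deriv_wordMap_le σ hz⟩
    ⟨x, hx, rfl⟩

lemma φnorm_le (σ : List (Fin cc.N)) {M : ℝ}
    (hM : ∀ x ∈ Icc (0:ℝ) 1, |deriv (cc.wordMap σ) x| ≤ M) : cc.φnorm σ ≤ M :=
  csSup_le ((nonempty_Icc.2 zero_le_one).image _) (by rintro _ ⟨x, hx, rfl⟩; exact hM x hx)

lemma φnorm_pos (σ : List (Fin cc.N)) : 0 < cc.φnorm σ :=
  (abs_pos.2 (cc.deriv_wordMap_ne_zero σ (left_mem_Icc.2 zero_le_one))).trans_le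
    (cc.le_φnorm σ (left_mem_Icc.2 zero_le_one))

lemma φnorm_le_xi_mul (σ : List (Fin cc.N)) {x : ℝ} (hx : x ∈ Icc (0:ℝ) 1) :
    cc.φnorm σ ≤ cc.xi * |deriv (cc.wordMap σ) x| :=
  cc.φnorm_le σ fun _ hy => cc.abs_deriv_wordMap_le_xi_mul σ hy hx

lemma wordMap_append (σ τ : List (Fin cc.N)) :
    cc.wordMap (σ ++ τ) = cc.wordMap σ ∘ cc.wordMap τ := by
  induction σ with
  | nil => rfl
  | cons j σ ih => simp [wordMap, ih, Function.comp_assoc]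

lemma deriv_wordMap_append (σ τ : List (Fin cc.N)) {x : ℝ} (hx : x ∈ Icc (0:ℝ) 1) :
    deriv (cc.wordMap (σ ++ τ)) x =
      deriv (cc.wordMap σ) (cc.wordMap τ x) * deriv (cc.wordMap τ) x := by
  rw [cc.wordMap_append]
  exact deriv_comp x (cc.differentiableAt_wordMap σ (cc.wordMap_mem τ hx))
    (cc.differentiableAt_wordMap τ hx)

lemma φnorm_append_le (σ τ : List (Fin cc.N)) :
    cc.φnorm (σ ++ τ) ≤ cc.φnorm σ * cc.φnorm τ := by
  refine cc.φnorm_le _ fun x hx => ?_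
  rw [cc.deriv_wordMap_append σ τ hx, abs_mul]
  exact mul_le_mul (cc.le_φnorm σ (cc.wordMap_mem τ hx)) (cc.le_φnorm τ hx)
    (abs_nonneg _) (cc.φnorm_pos σ).le

lemma φnorm_mul_φnorm_le (σ τ : List (Fin cc.N)) :
    cc.φnorm σ * cc.φnorm τ ≤ cc.xi * cc.φnorm (σ ++ τ) := by
  rw [← le_div_iff₀' (cc.φnorm_pos σ)]
  refine cc.φnorm_le τ fun x hx => ?_
  rw [le_div_iff₀' (cc.φnorm_pos σ)]
  calc cc.φnorm σ * |deriv (cc.wordMap τ) x|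
      ≤ cc.xi * |deriv (cc.wordMap σ) (cc.wordMap τ x)| * |deriv (cc.wordMap τ) x| := by
        gcongr
        exact cc.φnorm_le_xi_mul σ (cc.wordMap_mem τ hx)
    _ = cc.xi * |deriv (cc.wordMap (σ ++ τ)) x| := by
        rw [cc.deriv_wordMap_append σ τ hx, abs_mul, mul_assoc]
    _ ≤ cc.xi * cc.φnorm (σ ++ τ) := by
        gcongr
        · exact cc.xi_pos.le
        · exact cc.le_φnorm _ hx

lemma diamJ_le_φnorm (σ : List (Fin cc.N)) : cc.diamJ σ ≤ cc.φnorm σ := by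
  refine diam_le_of_forall_dist_le (cc.φnorm_pos σ).le ?_
  rintro _ ⟨x, hx, rfl⟩ _ ⟨y, hy, rfl⟩
  have hxy : |x - y| ≤ 1 := abs_sub_le_iff.2 ⟨by linarith [hx.2, hy.1], by linarith [hx.1, hy.2]⟩
  calc dist (cc.wordMap σ x) (cc.wordMap σ y) ≤ cc.φnorm σ * |x - y| :=
        cc.abs_wordMap_sub_le σ (fun z hz => cc.le_φnorm σ hz) hx hy
    _ ≤ cc.φnorm σ := mul_le_of_le_one_right (cc.φnorm_pos σ).le hxy

-- `|J_σ| ≥ |φ_σ(1) - φ_σ(0)| = |φ'_σ(z)|` for some `z` by the mean value theorem.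
lemma φnorm_le_xi_mul_diamJ (σ : List (Fin cc.N)) : cc.φnorm σ ≤ cc.xi * cc.diamJ σ := by
  obtain ⟨z, hz, hslope⟩ := exists_hasDerivAt_eq_slope (cc.wordMap σ) (deriv (cc.wordMap σ))
    zero_lt_one
    (fun x hx => (cc.differentiableAt_wordMap σ hx).continuousAt.continuousWithinAt)
    (fun x hx => (cc.differentiableAt_wordMap σ (Ioo_subset_Icc_self hx)).hasDerivAt)
  have hbdd : Bornology.IsBounded (cc.Jc σ) :=
    (isBounded_Icc (0:ℝ) 1).subset (image_subset_iff.2 fun x hx => cc.wordMap_mem σ hx)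
  have hdiam : |deriv (cc.wordMap σ) z| ≤ cc.diamJ σ := by
    rw [hslope, sub_zero, div_one, ← Real.dist_eq]
    exact dist_le_diam_of_mem hbdd (mem_image_of_mem _ (right_mem_Icc.2 zero_le_one))
      (mem_image_of_mem _ (left_mem_Icc.2 zero_le_one))
  exact (cc.φnorm_le_xi_mul σ (Ioo_subset_Icc_self hz)).trans
    (mul_le_mul_of_nonneg_left hdiam cc.xi_pos.le)

lemma xi_rpow_mul_xi_rpow_le {h : ℝ} (hh : 0 ≤ h) : cc.xi ^ h * cc.xi ^ h ≤ cc.xi ^ (3 * h) := by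
  rw [← rpow_add cc.xi_pos]
  exact rpow_le_rpow_of_exponent_le cc.one_le_xi (by linarith)

def weight (μ : Measure ℝ) (r : ℝ) (σ : List (Fin cc.N)) : ℝ :=
  (μ (cc.Jc σ)).toReal * cc.φnorm σ ^ r

variable {cc} {μ : Measure ℝ} {h : ℝ}

lemma eta_pos : 0 < cc.eta h := rpow_pos_of_pos cc.xi_pos _

lemma Lconst_pos : 0 < cc.Lconst h := mul_pos (pow_pos eta_pos 3) (rpow_pos_of_pos cc.xi_pos _)

lemma IsGibbsLike.toReal_le (hμ : cc.IsGibbsLike μ h) (hh : 0 ≤ h) {σ : List (Fin cc.N)}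
    (hσ : σ ≠ []) : (μ (cc.Jc σ)).toReal ≤ cc.eta h * cc.φnorm σ ^ h :=
  (hμ.2.2 σ hσ).2.trans (by
    gcongr
    · exact eta_pos.le
    · exact diam_nonneg
    · exact cc.diamJ_le_φnorm σ)

lemma IsGibbsLike.φnorm_rpow_le (hμ : cc.IsGibbsLike μ h) (hh : 0 ≤ h) {σ : List (Fin cc.N)}
    (hσ : σ ≠ []) : cc.φnorm σ ^ h ≤ cc.eta h * cc.xi ^ h * (μ (cc.Jc σ)).toReal := by
  have hlow := (hμ.2.2 σ hσ).1
  rw [inv_mul_le_iff₀ eta_pos] at hlow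
  calc cc.φnorm σ ^ h ≤ (cc.xi * cc.diamJ σ) ^ h := by
        gcongr
        · exact (cc.φnorm_pos σ).le
        · exact cc.φnorm_le_xi_mul_diamJ σ
    _ = cc.xi ^ h * cc.diamJ σ ^ h := mul_rpow cc.xi_pos.le diam_nonneg
    _ ≤ cc.xi ^ h * (cc.eta h * (μ (cc.Jc σ)).toReal) := by have := cc.xi_pos; gcongr
    _ = cc.eta h * cc.xi ^ h * (μ (cc.Jc σ)).toReal := by ring

lemma IsGibbsLike.toReal_pos (hμ : cc.IsGibbsLike μ h) (hh : 0 ≤ h) {σ : List (Fin cc.N)}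
    (hσ : σ ≠ []) : 0 < (μ (cc.Jc σ)).toReal :=
  pos_of_mul_pos_right ((rpow_pos_of_pos (cc.φnorm_pos σ) h).trans_le (hμ.φnorm_rpow_le hh hσ))
    (mul_pos eta_pos (rpow_pos_of_pos cc.xi_pos h)).le

lemma IsGibbsLike.weight_pos (hμ : cc.IsGibbsLike μ h) (hh : 0 ≤ h) (r : ℝ)
    {σ : List (Fin cc.N)} (hσ : σ ≠ []) : 0 < cc.weight μ r σ :=
  mul_pos (hμ.toReal_pos hh hσ) (rpow_pos_of_pos (cc.φnorm_pos σ) r)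

variable {r : ℝ} {σ τ : List (Fin cc.N)}

lemma IsGibbsLike.weight_append_le (hμ : cc.IsGibbsLike μ h) (hh : 0 ≤ h) (hr : 0 ≤ r)
    (hσ : σ ≠ []) (hτ : τ ≠ []) :
    cc.weight μ r (σ ++ τ) ≤ cc.Lconst h * cc.xi ^ r * (cc.weight μ r σ * cc.weight μ r τ) := by
  have hστ : σ ++ τ ≠ [] := by simp [hσ]
  have := cc.xi_pos
  have hη : 0 < cc.eta h := eta_pos
  have hpσ := cc.φnorm_pos σ
  have hpτ := cc.φnorm_pos τ
  calc cc.weight μ r (σ ++ τ)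
      ≤ (cc.eta h * (cc.φnorm σ * cc.φnorm τ) ^ h) * (cc.φnorm σ * cc.φnorm τ) ^ r := by
        have := cc.φnorm_append_le σ τ
        have := cc.φnorm_pos (σ ++ τ)
        refine mul_le_mul ((hμ.toReal_le hh hστ).trans (by gcongr)) (by gcongr)
          (by positivity) (by positivity)
    _ ≤ (cc.eta h * ((cc.eta h * cc.xi ^ h * (μ (cc.Jc σ)).toReal) *
          (cc.eta h * cc.xi ^ h * (μ (cc.Jc τ)).toReal))) * (cc.φnorm σ ^ r * cc.φnorm τ ^ r) := by
        rw [mul_rpow hpσ.le hpτ.le, mul_rpow hpσ.le hpτ.le]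
        gcongr
        · exact hμ.φnorm_rpow_le hh hσ
        · exact hμ.φnorm_rpow_le hh hτ
    _ = cc.eta h ^ 3 * (cc.xi ^ h * cc.xi ^ h) * (cc.weight μ r σ * cc.weight μ r τ) := by
        simp only [weight]; ring
    _ ≤ cc.eta h ^ 3 * (cc.xi ^ (3 * h) * cc.xi ^ r) * (cc.weight μ r σ * cc.weight μ r τ) := by
        have := hμ.weight_pos hh r hσ
        have := hμ.weight_pos hh r hτ
        gcongr cc.eta h ^ 3 * ?_ * _
        exact (cc.xi_rpow_mul_xi_rpow_le hh).trans (le_mul_of_one_le_right (by positivity)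
          (one_le_rpow cc.one_le_xi hr))
    _ = cc.Lconst h * cc.xi ^ r * (cc.weight μ r σ * cc.weight μ r τ) := by rw [Lconst]; ring

lemma IsGibbsLike.weight_mul_weight_le (hμ : cc.IsGibbsLike μ h) (hh : 0 ≤ h) (hr : 0 ≤ r)
    (hσ : σ ≠ []) (hτ : τ ≠ []) :
    cc.weight μ r σ * cc.weight μ r τ ≤ cc.Lconst h * cc.xi ^ r * cc.weight μ r (σ ++ τ) := by
  have hστ : σ ++ τ ≠ [] := by simp [hσ]
  have := cc.xi_pos
  have hη : 0 < cc.eta h := eta_pos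
  have hpσ := cc.φnorm_pos σ
  have hpτ := cc.φnorm_pos τ
  have hpστ := cc.φnorm_pos (σ ++ τ)
  have hP := cc.φnorm_mul_φnorm_le σ τ
  calc cc.weight μ r σ * cc.weight μ r τ
      = ((μ (cc.Jc σ)).toReal * (μ (cc.Jc τ)).toReal) * (cc.φnorm σ * cc.φnorm τ) ^ r := by
        rw [weight, weight, mul_rpow hpσ.le hpτ.le]; ring
    _ ≤ (cc.eta h * cc.φnorm σ ^ h * (cc.eta h * cc.φnorm τ ^ h)) *
          (cc.xi * cc.φnorm (σ ++ τ)) ^ r := by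
        gcongr
        · exact hμ.toReal_le hh hσ
        · exact hμ.toReal_le hh hτ
    _ = cc.eta h ^ 2 * (cc.φnorm σ * cc.φnorm τ) ^ h * (cc.xi * cc.φnorm (σ ++ τ)) ^ r := by
        rw [mul_rpow hpσ.le hpτ.le]; ring
    _ ≤ cc.eta h ^ 2 * (cc.xi ^ h * cc.φnorm (σ ++ τ) ^ h) * (cc.xi ^ r * cc.φnorm (σ ++ τ) ^ r) := by
        rw [← mul_rpow cc.xi_pos.le hpστ.le, ← mul_rpow cc.xi_pos.le hpστ.le]
        gcongr
    _ ≤ cc.eta h ^ 2 * (cc.xi ^ h * (cc.eta h * cc.xi ^ h * (μ (cc.Jc (σ ++ τ))).toReal)) *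
          (cc.xi ^ r * cc.φnorm (σ ++ τ) ^ r) := by
        gcongr
        exact hμ.φnorm_rpow_le hh hστ
    _ = cc.eta h ^ 3 * (cc.xi ^ h * cc.xi ^ h) * cc.xi ^ r * cc.weight μ r (σ ++ τ) := by
        simp only [weight]; ring
    _ ≤ cc.eta h ^ 3 * cc.xi ^ (3 * h) * cc.xi ^ r * cc.weight μ r (σ ++ τ) := by
        have := hμ.weight_pos hh r hστ
        gcongr
        exact cc.xi_rpow_mul_xi_rpow_le hh
    _ = cc.Lconst h * cc.xi ^ r * cc.weight μ r (σ ++ τ) := rfl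

variable {s : ℝ}

lemma IsGibbsLike.sum_weight_rpow_pos (hμ : cc.IsGibbsLike μ h) (hh : 0 ≤ h) (r s : ℝ) {n : ℕ}
    (hn : 0 < n) : 0 < ∑ σ : Fin n → Fin cc.N, cc.weight μ r (List.ofFn σ) ^ s := by
  have : Nonempty (Fin cc.N) := ⟨⟨0, by linarith [cc.hN]⟩⟩
  exact Finset.sum_pos (fun σ _ => rpow_pos_of_pos
    (hμ.weight_pos hh r (mt List.ofFn_eq_nil_iff.1 hn.ne')) s) Finset.univ_nonempty

lemma IsGibbsLike.sum_weight_rpow_add_le (hμ : cc.IsGibbsLike μ h) (hh : 0 ≤ h) (hr : 0 ≤ r)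
    (hs : 0 ≤ s) {m n : ℕ} (hm : 0 < m) (hn : 0 < n) :
    ∑ σ : Fin (m + n) → Fin cc.N, cc.weight μ r (List.ofFn σ) ^ s ≤
      (cc.Lconst h * cc.xi ^ r) ^ s *
        ((∑ σ : Fin m → Fin cc.N, cc.weight μ r (List.ofFn σ) ^ s) *
          ∑ τ : Fin n → Fin cc.N, cc.weight μ r (List.ofFn τ) ^ s) :=
  sum_ofFn_add_le (F := fun σ => cc.weight μ r σ ^ s) fun σ τ => by
    have hσ : List.ofFn σ ≠ [] := mt List.ofFn_eq_nil_iff.1 hm.ne'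
    have hτ : List.ofFn τ ≠ [] := mt List.ofFn_eq_nil_iff.1 hn.ne'
    have := cc.xi_pos
    have : 0 < cc.Lconst h := Lconst_pos
    have := hμ.weight_pos hh r hσ
    have := hμ.weight_pos hh r hτ
    rw [← mul_rpow (by positivity) (by positivity), ← mul_rpow (by positivity) (by positivity)]
    exact rpow_le_rpow (hμ.weight_pos hh r (by simp [hσ])).le
      (hμ.weight_append_le hh hr hσ hτ) hs

lemma IsGibbsLike.sum_weight_rpow_mul_le (hμ : cc.IsGibbsLike μ h) (hh : 0 ≤ h) (hr : 0 ≤ r)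
    (hs : 0 ≤ s) {m n : ℕ} (hm : 0 < m) (hn : 0 < n) :
    (∑ σ : Fin m → Fin cc.N, cc.weight μ r (List.ofFn σ) ^ s) *
        ∑ τ : Fin n → Fin cc.N, cc.weight μ r (List.ofFn τ) ^ s ≤
      (cc.Lconst h * cc.xi ^ r) ^ s *
        ∑ σ : Fin (m + n) → Fin cc.N, cc.weight μ r (List.ofFn σ) ^ s :=
  sum_ofFn_mul_sum_ofFn_le (F := fun σ => cc.weight μ r σ ^ s) fun σ τ => by
    have hσ : List.ofFn σ ≠ [] := mt List.ofFn_eq_nil_iff.1 hm.ne'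
    have hτ : List.ofFn τ ≠ [] := mt List.ofFn_eq_nil_iff.1 hn.ne'
    have := cc.xi_pos
    have : 0 < cc.Lconst h := Lconst_pos
    have := hμ.weight_pos hh r hσ
    have := hμ.weight_pos hh r hτ
    have := hμ.weight_pos hh r (by simp [hσ] : List.ofFn σ ++ List.ofFn τ ≠ [])
    rw [← mul_rpow (by positivity) (by positivity), ← mul_rpow (by positivity) (by positivity)]
    exact rpow_le_rpow (by positivity) (hμ.weight_mul_weight_le hh hr hσ hτ) hs

end CookieCutter

theorem sum_kappa_bounds_general (cc : CookieCutter)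
    (h : ℝ) (hh0 : 0 < h)
    (μ : MeasureTheory.Measure ℝ) (hμ : cc.IsGibbsLike μ h) (r : ℝ) (hr : 0 < r)
    (κ : ℝ) (hκ : 0 < κ)
    (hκlim : Filter.Tendsto
      (fun n : ℕ => (1 / (n : ℝ)) * Real.log
        (∑ σ : Fin n → Fin cc.N,
          ((μ (cc.Jc (List.ofFn σ))).toReal * cc.φnorm (List.ofFn σ) ^ r) ^ (κ / (r + κ))))
      Filter.atTop (nhds 0)) :
    ∀ n : ℕ, 1 ≤ n →
      ((cc.Lconst h * cc.xi ^ r) ^ (κ / (r + κ)))⁻¹ ≤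
        (∑ σ : Fin n → Fin cc.N,
          ((μ (cc.Jc (List.ofFn σ))).toReal * cc.φnorm (List.ofFn σ) ^ r) ^ (κ / (r + κ))) ∧
      (∑ σ : Fin n → Fin cc.N,
          ((μ (cc.Jc (List.ofFn σ))).toReal * cc.φnorm (List.ofFn σ) ^ r) ^ (κ / (r + κ))) ≤
        (cc.Lconst h * cc.xi ^ r) ^ (κ / (r + κ)) := by
  intro n hn
  have hs : 0 ≤ κ / (r + κ) := by positivity
  exact inv_le_and_le_of_quasi_multiplicative
    (u := fun n => ∑ σ : Fin n → Fin cc.N, cc.weight μ r (List.ofFn σ) ^ (κ / (r + κ)))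
    (rpow_pos_of_pos (mul_pos CookieCutter.Lconst_pos (rpow_pos_of_pos cc.xi_pos r)) _)
    (fun _ hm => hμ.sum_weight_rpow_pos hh0.le r _ hm)
    (fun _ _ hl hm => hμ.sum_weight_rpow_add_le hh0.le hr.le hs hl hm)
    (fun _ _ hl hm => hμ.sum_weight_rpow_mul_le hh0.le hr.le hs hl hm)
    (by simpa only [one_div_mul_eq_div, CookieCutter.weight] using hκlim) hn

theorem sum_kappa_bounds (cc : CookieCutter) (Q : ℝ → ℝ)
    (hQ : ∀ t : ℝ, Filter.Tendsto
      (fun k : ℕ => (1 / (k : ℝ)) * Real.log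
        (∑ σ : Fin k → Fin cc.N, cc.φnorm (List.ofFn σ) ^ t))
      Filter.atTop (nhds (Q t)))
    (h : ℝ) (hh0 : 0 < h) (hQh : Q h = 0)
    (μ : MeasureTheory.Measure ℝ) (hμ : cc.IsGibbsLike μ h) (r : ℝ) (hr : 0 < r)
    (κ : ℝ) (hκ : 0 < κ)
    (hκlim : Filter.Tendsto
      (fun n : ℕ => (1 / (n : ℝ)) * Real.log
        (∑ σ : Fin n → Fin cc.N,
          ((μ (cc.Jc (List.ofFn σ))).toReal * cc.φnorm (List.ofFn σ) ^ r) ^ (κ / (r + κ))))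
      Filter.atTop (nhds 0)) :
    ∀ n : ℕ, 1 ≤ n →
      ((cc.Lconst h * cc.xi ^ r) ^ (κ / (r + κ)))⁻¹ ≤
        (∑ σ : Fin n → Fin cc.N,
          ((μ (cc.Jc (List.ofFn σ))).toReal * cc.φnorm (List.ofFn σ) ^ r) ^ (κ / (r + κ))) ∧
      (∑ σ : Fin n → Fin cc.N,
          ((μ (cc.Jc (List.ofFn σ))).toReal * cc.φnorm (List.ofFn σ) ^ r) ^ (κ / (r + κ))) ≤
        (cc.Lconst h * cc.xi ^ r) ^ (κ / (r + κ)) :=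
  sum_kappa_bounds_general cc h hh0 μ hμ r hr κ hκ hκlim
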